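/- arXiv:2210.05578 — 4 statements merged into one kernel-verified Lean document; each statement's English description precedes it below -/
import Mathlib

section
/- Let P ⊆ ℝ^n be a polytope and let φ : ℝ^n → ℝ be a P-admissible convex function. Then for every u ∈ P the supremum φ*(u) = sup_{x ∈ ℝ^n} (⟨u, x⟩ − φ(x)) is finite, and the restriction of the Legendre transform φ* to P is a convex and continuous function on P. -/
/-- The support function `Ψ_P(x) = sup_{u ∈ P} ⟨u, x⟩` of a set `P ⊆ ℝ^n`. -/
noncomputable def suppFn {n : ℕ} (P : Set (Fin n → ℝ)) (x : Fin n → ℝ) : ℝ :=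
  sSup ((fun u => ∑ i, u i * x i) '' P)

/-- The Legendre transform `φ*(u) = sup_{x ∈ ℝ^n} (⟨u, x⟩ − φ(x))`. -/
noncomputable def legendre {n : ℕ} (φ : (Fin n → ℝ) → ℝ) (u : Fin n → ℝ) : ℝ :=
  sSup (Set.range fun x => (∑ i, u i * x i) - φ x)

/-!
For `u ∈ P` admissibility gives `⟨u, x⟩ - φ x ≤ Ψ_P x - φ x ≤ C`, so `φ*` is finite and bounded
above by `C` on `P`; as a supremum of affine functions it is convex and lower semicontinuous.
Upper semicontinuity is where the polytope matters. Near a point `l₀` of the standard simplex,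
every point of the simplex is `(1 - t) l₀ + t μ` with `μ` in the simplex and `t` as small as we
like, so a convex `G ≤ M` satisfies `G ≤ (1 - t) G l₀ + t M` there. A polytope is a continuous
image of a simplex, and upper semicontinuity passes to such images because superlevel sets
are compact.
-/

open Set Filter Topology

theorem UpperSemicontinuousOn.image_of_comp {α β γ : Type*} [TopologicalSpace α]
    [TopologicalSpace β] [T2Space β] [LinearOrder γ] {K : Set α} {A : α → β} {F : β → γ}
    (hK : IsCompact K) (hA : ContinuousOn A K) (hF : UpperSemicontinuousOn (F ∘ A) K) :
    UpperSemicontinuousOn F (A '' K) := by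
  refine upperSemicontinuousOn_iff_preimage_Ici.2 fun b => ⟨A '' (K ∩ A ⁻¹' (F ⁻¹' Ici b)),
    ((hF.isCompact_inter_preimage_Ici hK b).image_of_continuousOn
      (hA.mono inter_subset_left)).isClosed, ?_⟩
  rw [image_inter_preimage, ← inter_assoc, inter_self]

theorem homothety_image_stdSimplex_mem_nhdsWithin {ι : Type*} [Fintype ι]
    {l₀ : ι → ℝ} (hl₀ : l₀ ∈ stdSimplex ℝ ι) {t : ℝ} (ht : 0 < t) :
    AffineMap.homothety l₀ t '' stdSimplex ℝ ι ∈ 𝓝[stdSimplex ℝ ι] l₀ := by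
  have hnear : ∀ᶠ l in 𝓝 l₀, ∀ i, l₀ i = 0 ∨ |l i - l₀ i| < t * l₀ i := by
    refine eventually_all.2 fun i => ?_
    rcases (hl₀.1 i).eq_or_lt with h | h
    · exact .of_forall fun _ => .inl h.symm
    · have hcont : Continuous fun l : ι → ℝ => |l i - l₀ i| := by fun_prop
      exact (hcont.tendsto' l₀ 0 (by simp)).eventually (gt_mem_nhds (by positivity)) |>.mono
        fun _ => .inr
  filter_upwards [nhdsWithin_le_nhds hnear, self_mem_nhdsWithin] with l hnear hl
  refine ⟨AffineMap.homothety l₀ t⁻¹ l, ⟨fun i => ?_, ?_⟩, ?_⟩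
  · have hnonneg : 0 ≤ t⁻¹ * (l i - l₀ i + t * l₀ i) := by
      refine mul_nonneg (inv_nonneg.2 ht.le) ?_
      rcases hnear i with h | h
      · simp [h, hl.1 i]
      · linarith [(abs_lt.1 h).1]
    simpa [AffineMap.homothety_apply, mul_add, ← mul_assoc, ht.ne'] using hnonneg
  · simp [AffineMap.homothety_apply, Finset.sum_add_distrib, ← Finset.mul_sum, hl.2, hl₀.2]
  · rw [← AffineMap.homothety_mul_apply, mul_inv_cancel₀ ht.ne', AffineMap.homothety_one,
      AffineMap.id_apply]

theorem ConvexOn.upperSemicontinuousOn_stdSimplex {ι : Type*} [Fintype ι]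
    {G : (ι → ℝ) → ℝ} {M : ℝ} (hG : ConvexOn ℝ (stdSimplex ℝ ι) G)
    (hM : ∀ l ∈ stdSimplex ℝ ι, G l ≤ M) : UpperSemicontinuousOn G (stdSimplex ℝ ι) := by
  intro l₀ hl₀ y hy
  have hsmall : ∀ᶠ t in 𝓝[>] (0 : ℝ), t ≤ 1 ∧ (1 - t) * G l₀ + t * M < y := by
    have hcont : Continuous fun t : ℝ => (1 - t) * G l₀ + t * M := by fun_prop
    filter_upwards [Ioc_mem_nhdsGT one_pos, nhdsWithin_le_nhds <|
      (hcont.tendsto' 0 (G l₀) (by simp)).eventually (gt_mem_nhds hy)] with t ht hty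
    exact ⟨ht.2, hty⟩
  obtain ⟨t, ⟨ht1, hty⟩, ht0⟩ := (hsmall.and self_mem_nhdsWithin).exists
  filter_upwards [homothety_image_stdSimplex_mem_nhdsWithin hl₀ ht0]
  rintro _ ⟨μ, hμ, rfl⟩
  rw [AffineMap.homothety_eq_lineMap, AffineMap.lineMap_apply_module]
  calc G ((1 - t) • l₀ + t • μ) ≤ (1 - t) • G l₀ + t • G μ :=
        hG.2 hl₀ hμ (by linarith) ht0.le (by ring)
    _ ≤ (1 - t) * G l₀ + t * M := by
        simp only [smul_eq_mul]; gcongr; exact hM μ hμ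
    _ < y := hty

theorem ConvexOn.upperSemicontinuousOn_convexHull {E : Type*} [AddCommGroup E] [Module ℝ E]
    [TopologicalSpace E] [IsTopologicalAddGroup E] [ContinuousSMul ℝ E] [T2Space E]
    {s : Set E} (hs : s.Finite) {F : E → ℝ} {M : ℝ} (hF : ConvexOn ℝ (convexHull ℝ s) F)
    (hM : ∀ u ∈ convexHull ℝ s, F u ≤ M) : UpperSemicontinuousOn F (convexHull ℝ s) := by
  let := hs.fintype
  rw [hs.convexHull_eq_image] at hF hM ⊢
  set A : (s → ℝ) →ₗ[ℝ] E := ∑ x : s, (LinearMap.proj x).smulRight x.1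
  refine UpperSemicontinuousOn.image_of_comp (isCompact_stdSimplex ℝ s)
    A.continuous_of_finiteDimensional.continuousOn ?_
  exact ((hF.comp_linearMap A).subset (subset_preimage_image A _) (convex_stdSimplex ℝ s)
    ).upperSemicontinuousOn_stdSimplex (M := M) fun l hl => hM _ (mem_image_of_mem A hl)

theorem convexOn_ciSup {ι E : Type*} [Nonempty ι] [AddCommGroup E] [Module ℝ E] {s : Set E}
    {f : ι → E → ℝ} (hs : Convex ℝ s) (hf : ∀ i, ConvexOn ℝ s (f i))
    (hbdd : ∀ x ∈ s, BddAbove (range fun i => f i x)) :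
    ConvexOn ℝ s fun x => ⨆ i, f i x := by
  refine ⟨hs, fun x hx y hy a b ha hb hab => ciSup_le fun i => ?_⟩
  simp only [smul_eq_mul] at *
  calc f i (a • x + b • y) ≤ a * f i x + b * f i y := (hf i).2 hx hy ha hb hab
    _ ≤ a * (⨆ i, f i x) + b * ⨆ i, f i y := by
        gcongr
        exacts [le_ciSup (hbdd x hx) i, le_ciSup (hbdd y hy) i]

section Legendre

variable {n : ℕ}

theorem sum_mul_le_suppFn {P : Set (Fin n → ℝ)} (hP : IsCompact P) {u : Fin n → ℝ} (hu : u ∈ P)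
    (x : Fin n → ℝ) : ∑ i, u i * x i ≤ suppFn P x :=
  le_csSup (hP.image (by fun_prop)).bddAbove (mem_image_of_mem _ hu)

theorem convexOn_legendre {φ : (Fin n → ℝ) → ℝ} {s : Set (Fin n → ℝ)} (hs : Convex ℝ s)
    (hbdd : ∀ u ∈ s, BddAbove (range fun x => (∑ i, u i * x i) - φ x)) :
    ConvexOn ℝ s (legendre φ) :=
  convexOn_ciSup hs (fun x => (((dotProductBilin ℝ ℝ).flip x).convexOn hs).sub
    (concaveOn_const _ hs)) hbdd

theorem lowerSemicontinuousOn_legendre {φ : (Fin n → ℝ) → ℝ} {s : Set (Fin n → ℝ)}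
    (hbdd : ∀ u ∈ s, BddAbove (range fun x => (∑ i, u i * x i) - φ x)) :
    LowerSemicontinuousOn (legendre φ) s :=
  lowerSemicontinuousOn_ciSup hbdd fun _ =>
    (Continuous.lowerSemicontinuous (by fun_prop)).lowerSemicontinuousOn s

end Legendre

theorem stmt_0_general {n : ℕ} (P : Set (Fin n → ℝ))
    (hP : ∃ S : Finset (Fin n → ℝ), S.Nonempty ∧ P = convexHull ℝ (S : Set (Fin n → ℝ)))
    (φ : (Fin n → ℝ) → ℝ)
    (hadm : ∃ C : ℝ, ∀ x, |φ x - suppFn P x| ≤ C) :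
    (∀ u ∈ P, BddAbove (Set.range fun x => (∑ i, u i * x i) - φ x)) ∧
    ConvexOn ℝ P (legendre φ) ∧ ContinuousOn (legendre φ) P := by
  obtain ⟨S, -, hPS⟩ := hP
  obtain ⟨C, hC⟩ := hadm
  have hPc : IsCompact P := hPS ▸ S.finite_toSet.isCompact_convexHull ℝ
  have hle : ∀ u ∈ P, ∀ x, (∑ i, u i * x i) - φ x ≤ C := fun u hu x => by
    linarith [sum_mul_le_suppFn hPc hu x, (abs_le.1 (hC x)).1]
  have hbdd : ∀ u ∈ P, BddAbove (range fun x => (∑ i, u i * x i) - φ x) :=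
    fun u hu => ⟨C, forall_mem_range.2 (hle u hu)⟩
  have hconv := convexOn_legendre (hPS ▸ convex_convexHull ℝ _) hbdd
  refine ⟨hbdd, hconv, continuousOn_iff_lower_upperSemicontinuousOn.2
    ⟨lowerSemicontinuousOn_legendre hbdd, ?_⟩⟩
  subst hPS
  exact hconv.upperSemicontinuousOn_convexHull S.finite_toSet fun u hu =>
    csSup_le (range_nonempty _) (forall_mem_range.2 (hle u hu))

/-- if `P` is a polytope and `φ` is a `P`-admissible convex function, then for
every `u ∈ P` the defining supremum of `φ*(u)` is finite (bounded above), and `φ*` restricted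
to `P` is convex and continuous. -/
theorem stmt_0 {n : ℕ} (P : Set (Fin n → ℝ))
    (hP : ∃ S : Finset (Fin n → ℝ), S.Nonempty ∧ P = convexHull ℝ (S : Set (Fin n → ℝ)))
    (φ : (Fin n → ℝ) → ℝ) (hφconv : ConvexOn ℝ Set.univ φ)
    (hadm : ∃ C : ℝ, ∀ x, |φ x - suppFn P x| ≤ C) :
    (∀ u ∈ P, BddAbove (Set.range fun x => (∑ i, u i * x i) - φ x)) ∧
    ConvexOn ℝ P (legendre φ) ∧ ContinuousOn (legendre φ) P :=
  stmt_0_general P hP φ hadm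
end

section
/- Let P ⊆ ℝ^n be a polytope and let φ : ℝ^n → ℝ be a convex function. Then the following are equivalent: (a) the effective domain of the Legendre transform of φ equals P, i.e. {u ∈ ℝ^n : the set {⟨u, x⟩ − φ(x) : x ∈ ℝ^n} is bounded above} = P; (b) sup_{x ∈ ℝ^n} |φ(x) − Ψ_P(x)| < ∞, i.e. φ is P-admissible. -/
open Set Filter

lemma ConvexOn.exists_mem_isGreatest_image_convexHull {𝕜 E β : Type*} [Field 𝕜] [LinearOrder 𝕜]
    [IsStrictOrderedRing 𝕜] [AddCommGroup E] [AddCommGroup β] [LinearOrder β]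
    [IsOrderedAddMonoid β] [Module 𝕜 E] [Module 𝕜 β] [IsStrictOrderedModule 𝕜 β] {f : E → β}
    {S : Finset E} (hS : S.Nonempty) (hf : ConvexOn 𝕜 (convexHull 𝕜 (S : Set E)) f) :
    ∃ s ∈ S, IsGreatest (f '' convexHull 𝕜 (S : Set E)) (f s) := by
  obtain ⟨s, hs, hmax⟩ := S.exists_max_image f hS
  refine ⟨s, hs, mem_image_of_mem f (subset_convexHull 𝕜 _ hs), forall_mem_image.2 fun y hy => ?_⟩
  obtain ⟨z, hz, hyz⟩ := hf.exists_ge_of_mem_convexHull (subset_convexHull 𝕜 _) hy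
  exact hyz.trans (hmax z hz)

lemma exists_dotProduct_eq {ι : Type*} [Fintype ι] (f : (ι → ℝ) →ₗ[ℝ] ℝ) :
    ∃ v : ι → ℝ, ∀ x, f x = x ⬝ᵥ v := by
  classical
  exact ⟨fun i => f fun j => if i = j then 1 else 0, fun x => by
    simp [dotProduct, LinearMap.pi_apply_eq_sum_univ f x]⟩

theorem ConvexOn.exists_subgradient {E : Type*} [TopologicalSpace E] [AddCommGroup E]
    [IsTopologicalAddGroup E] [Module ℝ E] [ContinuousSMul ℝ E] [LocallyConvexSpace ℝ E]
    {φ : E → ℝ} (hφ : ConvexOn ℝ univ φ) (hcont : Continuous φ) (x : E) :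
    ∃ ℓ : StrongDual ℝ E, ∀ y, ℓ y - φ y ≤ ℓ x - φ x := by
  -- Separate `(x, φ x)` from the open strict epigraph by `f (y, t) = g y + t c`; then `c < 0`
  -- and `ℓ = g / (-c)` is a subgradient.
  obtain ⟨f, hf⟩ := geometric_hahn_banach_open_point (x := (x, φ x))
    (s := {p : E × ℝ | φ p.1 < p.2}) (by simpa using hφ.convex_strict_epigraph)
    (isOpen_lt (hcont.comp continuous_fst) continuous_snd) (lt_irrefl (φ x))
  set g := f.comp (ContinuousLinearMap.inl ℝ E ℝ)
  set c := f (0, 1)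
  have hsplit : ∀ y t, f (y, t) = g y + t * c := fun y t => by
    rw [show (y, t) = (y, 0) + t • ((0 : E), (1 : ℝ)) by simp, map_add, map_smul, smul_eq_mul]
    rfl
  have hc : c < 0 := by
    have := hf (x, φ x + 1) (by simp)
    rw [hsplit, hsplit] at this
    linarith
  have hepi : ∀ y, g y + φ y * c ≤ g x + φ x * c := fun y =>
    le_of_forall_pos_lt_add fun ε hε => by
      have := hf (y, φ y + ε / -c) (by simpa using div_pos hε (neg_pos.2 hc))
      rw [hsplit, hsplit, add_mul, div_mul_eq_mul_div, div_neg, mul_div_cancel_right₀ _ hc.ne]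
        at this
      linarith
  refine ⟨(-c)⁻¹ • g, fun y => ?_⟩
  have hscale : ∀ z, ((-c)⁻¹ • g) z - φ z = (-c)⁻¹ * (g z + φ z * c) := fun z => by
    have := hc.ne
    simp only [smul_apply, smul_eq_mul]
    field_simp
    ring
  rw [hscale, hscale]
  exact mul_le_mul_of_nonneg_left (hepi y) (inv_nonneg.2 (neg_nonneg.2 hc.le))

theorem ConvexOn.exists_dotProduct_sub_le {ι : Type*} [Fintype ι] {φ : (ι → ℝ) → ℝ}
    (hφ : ConvexOn ℝ univ φ) (x : ι → ℝ) :
    ∃ u : ι → ℝ, ∀ y, u ⬝ᵥ y - φ y ≤ u ⬝ᵥ x - φ x := by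
  obtain ⟨ℓ, hℓ⟩ := hφ.exists_subgradient hφ.locallyLipschitz.continuous x
  obtain ⟨u, hu⟩ := exists_dotProduct_eq (ℓ : (ι → ℝ) →ₗ[ℝ] ℝ)
  refine ⟨u, fun y => ?_⟩
  simpa only [dotProduct_comm u, ← hu, ContinuousLinearMap.coe_coe] using hℓ y

/-- The effective domain `dom φ*` of the Legendre transform `φ*(u) = sup_x (⟨u, x⟩ - φ x)`. -/
def legendreDom {ι : Type*} [Fintype ι] (φ : (ι → ℝ) → ℝ) : Set (ι → ℝ) :=
  {u | BddAbove (range fun x => u ⬝ᵥ x - φ x)}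

section SupportFunction

variable {n : ℕ} {P : Set (Fin n → ℝ)}

lemma dotProduct_le_suppFn (hP : IsCompact P) {u : Fin n → ℝ} (hu : u ∈ P) (x : Fin n → ℝ) :
    u ⬝ᵥ x ≤ suppFn P x :=
  le_csSup (hP.bddAbove_image (continuous_id.dotProduct continuous_const).continuousOn)
    (mem_image_of_mem (· ⬝ᵥ x) hu)

lemma suppFn_le (hP : P.Nonempty) {x : Fin n → ℝ} {r : ℝ} (h : ∀ u ∈ P, u ⬝ᵥ x ≤ r) :
    suppFn P x ≤ r :=
  csSup_le (hP.image _) (forall_mem_image.2 h)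

lemma exists_mem_suppFn_convexHull_eq {S : Finset (Fin n → ℝ)} (hS : S.Nonempty)
    (x : Fin n → ℝ) : ∃ s ∈ S, suppFn (convexHull ℝ (S : Set (Fin n → ℝ))) x = s ⬝ᵥ x := by
  obtain ⟨s, hs, hmax⟩ := ConvexOn.exists_mem_isGreatest_image_convexHull hS
    (((dotProductBilin ℝ ℝ).flip x).convexOn (convex_convexHull ℝ _))
  exact ⟨s, hs, hmax.csSup_eq⟩

end SupportFunction

section Admissible

variable {n : ℕ} {P : Set (Fin n → ℝ)} {φ : (Fin n → ℝ) → ℝ}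

lemma exists_suppFn_convexHull_sub_le {S : Finset (Fin n → ℝ)} (hS : S.Nonempty)
    (hdom : (S : Set (Fin n → ℝ)) ⊆ legendreDom φ) :
    ∃ C, ∀ x, suppFn (convexHull ℝ (S : Set (Fin n → ℝ))) x - φ x ≤ C := by
  obtain ⟨C, hC⟩ := S.finite_toSet.bddAbove_biUnion.2 hdom
  refine ⟨C, fun x => ?_⟩
  obtain ⟨s, hs, hsx⟩ := exists_mem_suppFn_convexHull_eq hS x
  exact hsx ▸ hC (mem_biUnion hs (mem_range_self x))

lemma sub_suppFn_le_of_legendreDom_subset (hφ : ConvexOn ℝ univ φ) (hP : IsCompact P)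
    (hdom : legendreDom φ ⊆ P) (x : Fin n → ℝ) : φ x - suppFn P x ≤ φ 0 := by
  obtain ⟨u, hu⟩ := hφ.exists_dotProduct_sub_le x
  have huP : u ∈ P := hdom ⟨u ⬝ᵥ x - φ x, forall_mem_range.2 hu⟩
  have h0 := hu 0
  rw [dotProduct_zero, zero_sub] at h0
  linarith [dotProduct_le_suppFn hP huP x]

lemma subset_legendreDom_of_suppFn_sub_le (hP : IsCompact P) {C : ℝ}
    (hC : ∀ x, suppFn P x - φ x ≤ C) : P ⊆ legendreDom φ := fun _ hu =>
  ⟨C, forall_mem_range.2 fun x => (sub_le_sub_right (dotProduct_le_suppFn hP hu x) _).trans (hC x)⟩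

lemma legendreDom_subset_of_sub_suppFn_le (hPconv : Convex ℝ P) (hPclosed : IsClosed P)
    (hPne : P.Nonempty) {C : ℝ} (hC : ∀ x, φ x - suppFn P x ≤ C) : legendreDom φ ⊆ P := by
  intro u hu
  by_contra huP
  obtain ⟨f, r, hfP, hru⟩ := geometric_hahn_banach_closed_point hPconv hPclosed huP
  obtain ⟨v, hv⟩ := exists_dotProduct_eq (f : (Fin n → ℝ) →ₗ[ℝ] ℝ)
  simp only [ContinuousLinearMap.coe_coe] at hv
  have hlow : ∀ t : ℝ, 0 ≤ t → t * (f u - r) - C ≤ u ⬝ᵥ (t • v) - φ (t • v) := fun t ht => by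
    have hsupp : suppFn P (t • v) ≤ t * r := suppFn_le hPne fun p hp => by
      rw [dotProduct_smul, smul_eq_mul, ← hv]
      exact mul_le_mul_of_nonneg_left (hfP p hp).le ht
    rw [dotProduct_smul, smul_eq_mul, ← hv]
    linarith [hC (t • v)]
  have hunbdd : Tendsto (fun t : ℝ => u ⬝ᵥ (t • v) - φ (t • v)) atTop atTop :=
    tendsto_atTop_mono' _ ((eventually_ge_atTop 0).mono hlow)
      (tendsto_atTop_add_const_right _ _ (tendsto_id.atTop_mul_const (sub_pos.2 hru)))
  exact not_bddAbove_of_tendsto_atTop hunbdd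
    (hu.mono (range_comp_subset_range (· • v) fun x => u ⬝ᵥ x - φ x))

end Admissible

/-- for a polytope `P` and a convex function `φ : ℝ^n → ℝ`, the effective
domain of the Legendre transform of `φ` equals `P` if and only if `φ` is `P`-admissible,
i.e. `sup_x |φ(x) − Ψ_P(x)| < ∞`. -/
theorem stmt_2 {n : ℕ} (P : Set (Fin n → ℝ))
    (hP : ∃ S : Finset (Fin n → ℝ), S.Nonempty ∧ P = convexHull ℝ (S : Set (Fin n → ℝ)))
    (φ : (Fin n → ℝ) → ℝ) (hφconv : ConvexOn ℝ Set.univ φ) :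
    {u : Fin n → ℝ | BddAbove (Set.range fun x => (∑ i, u i * x i) - φ x)} = P ↔
      ∃ C : ℝ, ∀ x, |φ x - suppFn P x| ≤ C := by
  obtain ⟨S, hS, rfl⟩ := hP
  have hcompact := S.finite_toSet.isCompact_convexHull (𝕜 := ℝ)
  change legendreDom φ = _ ↔ _
  constructor
  · intro hdom
    obtain ⟨C, hC⟩ := exists_suppFn_convexHull_sub_le hS (hdom ▸ subset_convexHull ℝ _)
    refine ⟨max C (φ 0), fun x => abs_le.2 ⟨?_, ?_⟩⟩
    · linarith [hC x, le_max_left C (φ 0)]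
    · linarith [sub_suppFn_le_of_legendreDom_subset hφconv hcompact hdom.le x,
        le_max_right C (φ 0)]
  · rintro ⟨C, hC⟩
    refine (legendreDom_subset_of_sub_suppFn_le (convex_convexHull ℝ _) hcompact.isClosed
      (hS.to_set.convexHull) fun x => (abs_le.1 (hC x)).2).antisymm
      (subset_legendreDom_of_suppFn_sub_le hcompact (C := C) fun x => ?_)
    linarith [(abs_le.1 (hC x)).1]
end

section
/- Let n ≥ 1. In ℝ^{n+1} let m_0 = (1, …, 1) and, for j = 1, …, n+1, let m_j be the vector with j-th coordinate −(n+1) and all other coordinates 1; set V = {m_0, …, m_{n+1}}. Consider the n+3 affine functions ℓ_⋆ ≡ 0 and ℓ_m(x) = 1 − ⟨m, x⟩ for m ∈ V, and let L(x) be their minimum. Define Trop ⊆ ℝ^{n+1} as the set of points x at which at least two distinct of these n+3 affine functions attain the minimum L(x). Then the set Ω = {x ∈ ℝ^{n+1} : ⟨m, x⟩ < 1 for all m ∈ V} is a bounded connected component of ℝ^{n+1} ∖ Trop, and every other connected component of ℝ^{n+1} ∖ Trop is unbounded. -/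
/-- The vertices `m_0 = (1,…,1)` and, for `j = 1,…,n+1`, `m_j` with `j`-th coordinate
`−(n+1)` and all other coordinates `1`. -/
noncomputable def mvec (n : ℕ) : Fin (n + 2) → Fin (n + 1) → ℝ :=
  Fin.cases (fun _ => 1) fun j i => if i = j then -(n + 1 : ℝ) else 1

/-- The `n+3` affine functions `ℓ_⋆ ≡ 0` and `ℓ_m(x) = 1 − ⟨m, x⟩` for `m ∈ V`. -/
noncomputable def ell (n : ℕ) : Option (Fin (n + 2)) → (Fin (n + 1) → ℝ) → ℝ
  | none => fun _ => 0
  | some j => fun x => 1 - ∑ i, mvec n j i * x i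

/-- The tropicalization `L(x) = min(0, min_{m ∈ V} (1 − ⟨m, x⟩))`. -/
noncomputable def Lmin (n : ℕ) (x : Fin (n + 1) → ℝ) : ℝ :=
  Finset.univ.inf' Finset.univ_nonempty fun a : Option (Fin (n + 2)) => ell n a x

/-- The tropical hypersurface: points where at least two distinct of the `n+3` affine
functions attain the minimum `L(x)`. -/
def TropSet (n : ℕ) : Set (Fin (n + 1) → ℝ) :=
  {x | ∃ a b : Option (Fin (n + 2)), a ≠ b ∧ ell n a x = Lmin n x ∧ ell n b x = Lmin n x}

/-- The open polytope `Ω = Int(P^*) = {x : ⟨m, x⟩ < 1 for all m ∈ V}`. -/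
def OmegaSet (n : ℕ) : Set (Fin (n + 1) → ℝ) :=
  {x | ∀ j : Fin (n + 2), ∑ i, mvec n j i * x i < 1}

/-!
The functions `ℓ_a` are affine, so the complement of `Trop` is the disjoint union of the open
convex regions on which a single `ℓ_a` is the strict minimum, and these regions are its connected
components. The region of `ℓ_⋆ ≡ 0` is `Ω`. With `s = ∑ xᵢ` its constraints read `s < 1` and
`s - (n + 2) xᵢ < 1`; summing the latter gives `s > -(n + 1)`, which pins every coordinate, so `Ω`
is bounded. The region of `ℓ_{m_k}` is stable under `x ↦ x + t m_k` for `t ≥ 0`, because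
`⟨m_j, m_k⟩ ≤ 0 ≤ ⟨m_k, m_k⟩` for `j ≠ k`: along `m_k` the function `ℓ_{m_k}` decreases at least
as fast as every other `ℓ_a`. Hence every other region is unbounded.
-/

open Set Matrix Function

theorem connectedComponentIn_iUnion_eq {ι X : Type*} [TopologicalSpace X] {R : ι → Set X}
    (hopen : ∀ b, IsOpen (R b)) (hdisj : Pairwise (Disjoint on R)) {a : ι}
    (hconn : IsPreconnected (R a)) {x : X} (hx : x ∈ R a) :
    connectedComponentIn (⋃ b, R b) x = R a := by
  refine Subset.antisymm ?_ (hconn.subset_connectedComponentIn hx (subset_iUnion R a))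
  have hcover : (⋃ b, R b) ⊆ R a ∪ ⋃ (b) (_ : b ≠ a), R b := by
    refine iUnion_subset fun b => ?_
    by_cases hb : b = a
    · exact hb ▸ subset_union_left
    · exact (subset_biUnion_of_mem (u := R) hb).trans subset_union_right
  exact isPreconnected_connectedComponentIn.subset_left_of_subset_union (hopen a)
    (isOpen_biUnion fun b _ => hopen b)
    (disjoint_iUnion₂_right.2 fun b hb => hdisj (Ne.symm hb))
    ((connectedComponentIn_subset _ _).trans hcover)
    ⟨x, mem_connectedComponentIn (mem_iUnion.2 ⟨a, hx⟩), hx⟩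

theorem not_isBounded_of_forall_add_smul_mem {E : Type*} [NormedAddCommGroup E]
    [NormedSpace ℝ E] {s : Set E} {x v : E} (hv : v ≠ 0)
    (hs : ∀ t : ℝ, 0 ≤ t → x + t • v ∈ s) : ¬ Bornology.IsBounded s := by
  rw [Metric.isBounded_iff_subset_closedBall x]
  rintro ⟨r, hr⟩
  have hv' : 0 < ‖v‖ := norm_pos_iff.2 hv
  set t := (|r| + 1) / ‖v‖
  have ht : 0 ≤ t := by positivity
  have hmem := hr (hs t ht)
  rw [Metric.mem_closedBall, dist_eq_norm, add_sub_cancel_left, norm_smul,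
    Real.norm_of_nonneg ht, div_mul_cancel₀ _ hv'.ne'] at hmem
  linarith [le_abs_self r]

section StrictMinRegion

variable {ι X : Type*}

def strictMinRegion (f : ι → X → ℝ) (a : ι) : Set X :=
  {x | ∀ b ≠ a, f a x < f b x}

theorem pairwise_disjoint_strictMinRegion (f : ι → X → ℝ) :
    Pairwise (Disjoint on strictMinRegion f) := by
  intro a b hab
  refine Set.disjoint_left.2 fun x ha hb => ?_
  exact lt_asymm (ha b hab.symm) (hb a hab)

theorem isOpen_strictMinRegion [TopologicalSpace X] [Finite ι] {f : ι → X → ℝ}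
    (hf : ∀ a, Continuous (f a)) (a : ι) : IsOpen (strictMinRegion f a) := by
  simp only [strictMinRegion, ofPred_forall]
  exact isOpen_iInter_of_finite fun b => isOpen_iInter_of_finite fun _ =>
    isOpen_lt (hf a) (hf b)

variable {E : Type*} [AddCommGroup E] [Module ℝ E]

theorem convex_strictMinRegion (f : ι → E →ᵃ[ℝ] ℝ) (a : ι) :
    Convex ℝ (strictMinRegion (fun b => ⇑(f b)) a) := by
  have : strictMinRegion (fun b => ⇑(f b)) a = ⋂ b, ⋂ (_ : b ≠ a), (f b - f a) ⁻¹' Ioi 0 := by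
    ext x
    simp [strictMinRegion]
  rw [this]
  exact convex_iInter₂ fun b _ => (convex_Ioi 0).affine_preimage (f b - f a)

theorem add_smul_mem_strictMinRegion (f : ι → E →ᵃ[ℝ] ℝ) {a : ι} {x v : E}
    (hx : x ∈ strictMinRegion (fun b => ⇑(f b)) a) (hv : ∀ b, (f a).linear v ≤ (f b).linear v)
    {t : ℝ} (ht : 0 ≤ t) : x + t • v ∈ strictMinRegion (fun b => ⇑(f b)) a := by
  intro b hb
  have hmap : ∀ c, f c (x + t • v) = t * (f c).linear v + f c x := fun c => by
    rw [add_comm, ← vadd_eq_add, AffineMap.map_vadd, map_smul, smul_eq_mul, vadd_eq_add]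
  dsimp only
  rw [hmap, hmap]
  nlinarith [hx b hb, hv b]

end StrictMinRegion

section

variable (n : ℕ)

theorem mvec_zero : mvec n 0 = 1 := rfl

theorem mvec_succ (j : Fin (n + 1)) : mvec n j.succ = 1 - (n + 2 : ℝ) • Pi.single j 1 := by
  ext i
  by_cases h : i = j <;> simp [mvec, h]
  ring

theorem mvec_apply_ne_zero (k : Fin (n + 2)) (i : Fin (n + 1)) : mvec n k i ≠ 0 := by
  cases k using Fin.cases with
  | zero => simp [mvec_zero]
  | succ j =>
    rw [mvec_succ]
    by_cases h : i = j <;> simp [h]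
    linarith

theorem mvec_ne_zero (k : Fin (n + 2)) : mvec n k ≠ 0 :=
  fun h => mvec_apply_ne_zero n k 0 (congrFun h 0)

theorem mvec_zero_dotProduct_mvec_succ (j : Fin (n + 1)) : mvec n 0 ⬝ᵥ mvec n j.succ = -1 := by
  simp [mvec_succ, mvec_zero, dotProduct_sub, dotProduct_smul]
  ring

theorem mvec_succ_dotProduct_mvec_succ {p q : Fin (n + 1)} (hpq : p ≠ q) :
    mvec n p.succ ⬝ᵥ mvec n q.succ = -(n + 3) := by
  simp [mvec_succ, dotProduct_sub, dotProduct_smul, sub_dotProduct, smul_dotProduct, hpq]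
  ring

theorem mvec_dotProduct_mvec_nonpos {j k : Fin (n + 2)} (hjk : j ≠ k) :
    mvec n j ⬝ᵥ mvec n k ≤ 0 := by
  cases j using Fin.cases with
  | zero =>
    cases k using Fin.cases with
    | zero => exact absurd rfl hjk
    | succ q => rw [mvec_zero_dotProduct_mvec_succ]; norm_num
  | succ p =>
    cases k using Fin.cases with
    | zero => rw [dotProduct_comm, mvec_zero_dotProduct_mvec_succ]; norm_num
    | succ q =>
      rw [mvec_succ_dotProduct_mvec_succ n (Fin.succ_injective _ |>.ne_iff.1 hjk)]
      linarith [(n.cast_nonneg : (0 : ℝ) ≤ n)]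

noncomputable def ellAffine : Option (Fin (n + 2)) → (Fin (n + 1) → ℝ) →ᵃ[ℝ] ℝ
  | none => 0
  | some j => AffineMap.const ℝ _ 1 - (dotProductBilin ℝ ℝ (mvec n j)).toAffineMap

theorem coe_ellAffine : (fun a => ⇑(ellAffine n a)) = ell n := by
  ext a x
  cases a <;> rfl

theorem ellAffine_linear_le (k : Fin (n + 2)) (b : Option (Fin (n + 2))) :
    (ellAffine n (some k)).linear (mvec n k) ≤ (ellAffine n b).linear (mvec n k) := by
  have hself : 0 ≤ mvec n k ⬝ᵥ mvec n k := Finset.sum_nonneg fun i _ => mul_self_nonneg _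
  cases b with
  | none => simpa [ellAffine] using hself
  | some j =>
    simp only [ellAffine, AffineMap.sub_linear, AffineMap.const_linear,
      LinearMap.toAffineMap_linear, zero_sub, LinearMap.neg_apply, dotProductBilin_apply_apply,
      neg_le_neg_iff]
    rcases eq_or_ne j k with rfl | hjk
    · exact le_rfl
    · exact (mvec_dotProduct_mvec_nonpos n hjk).trans hself

theorem compl_TropSet : (TropSet n)ᶜ = ⋃ a, strictMinRegion (ell n) a := by
  ext x
  simp only [mem_compl_iff, mem_iUnion]
  constructor
  · intro hx
    obtain ⟨a, -, ha⟩ := Finset.exists_mem_eq_inf' Finset.univ_nonempty fun a => ell n a x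
    refine ⟨a, fun b hb => lt_of_le_of_ne ?_ fun hab => hx ⟨a, b, hb.symm, ha.symm, ?_⟩⟩
    · exact ha ▸ Finset.inf'_le _ (Finset.mem_univ b)
    · rw [← hab, ← ha]; rfl
  · rintro ⟨a, ha⟩ ⟨b, c, hbc, hb, hc⟩
    have hLmin : Lmin n x ≤ ell n a x := Finset.inf'_le _ (Finset.mem_univ a)
    rcases eq_or_ne b a with rfl | hba
    · exact (ha c hbc.symm).not_ge (hc.trans_le hLmin)
    · exact (ha b hba).not_ge (hb.trans_le hLmin)

theorem OmegaSet_eq_strictMinRegion : OmegaSet n = strictMinRegion (ell n) none := by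
  ext x
  simp [OmegaSet, strictMinRegion, ell, Option.forall]

theorem mvec_succ_dotProduct (j : Fin (n + 1)) (x : Fin (n + 1) → ℝ) :
    mvec n j.succ ⬝ᵥ x = ∑ i, x i - (n + 2) * x j := by
  simp [mvec_succ, sub_dotProduct, one_dotProduct, smul_dotProduct]

theorem OmegaSet_subset_closedBall : OmegaSet n ⊆ Metric.closedBall 0 (n + 1) := by
  intro x hx
  set s := ∑ i, x i
  have hs_lt : s < 1 := by simpa [mvec_zero, one_dotProduct] using hx 0
  have hsucc (i : Fin (n + 1)) : s - (n + 2) * x i < 1 := mvec_succ_dotProduct n i x ▸ hx i.succ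
  have hs_gt : -(n + 1 : ℝ) < s := by
    have := Finset.sum_lt_sum_of_nonempty Finset.univ_nonempty fun i _ => hsucc i
    simp only [Finset.sum_sub_distrib, ← Finset.mul_sum, Finset.sum_const, Finset.card_univ,
      Fintype.card_fin, nsmul_eq_mul] at this
    push_cast at this
    linarith
  have hlow (i : Fin (n + 1)) : -1 < x i := by nlinarith [hsucc i]
  have hup (i : Fin (n + 1)) : x i < n + 1 := by
    have := Finset.single_le_sum (f := fun j => x j + 1) (fun j _ => by linarith [hlow j])
      (Finset.mem_univ i)
    simp only [Finset.sum_add_distrib, Finset.sum_const, Finset.card_univ, Fintype.card_fin,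
      nsmul_eq_mul, mul_one] at this
    push_cast at this
    linarith
  rw [mem_closedBall_zero_iff, pi_norm_le_iff_of_nonneg (by positivity)]
  exact fun i => abs_le.2 ⟨by linarith [hlow i], (hup i).le⟩

theorem isBounded_OmegaSet : Bornology.IsBounded (OmegaSet n) :=
  Metric.isBounded_closedBall.subset (OmegaSet_subset_closedBall n)

theorem connectedComponentIn_compl_TropSet {a : Option (Fin (n + 2))} {x : Fin (n + 1) → ℝ}
    (hx : x ∈ strictMinRegion (ell n) a) :
    connectedComponentIn (TropSet n)ᶜ x = strictMinRegion (ell n) a := by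
  rw [compl_TropSet, ← coe_ellAffine] at *
  exact connectedComponentIn_iUnion_eq
    (isOpen_strictMinRegion fun b => (ellAffine n b).continuous_of_finiteDimensional)
    (pairwise_disjoint_strictMinRegion _) (convex_strictMinRegion _ a).isPreconnected hx

theorem not_isBounded_strictMinRegion_some {k : Fin (n + 2)} {x : Fin (n + 1) → ℝ}
    (hx : x ∈ strictMinRegion (ell n) (some k)) :
    ¬ Bornology.IsBounded (strictMinRegion (ell n) (some k)) := by
  rw [← coe_ellAffine] at *
  exact not_isBounded_of_forall_add_smul_mem (mvec_ne_zero n k)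
    fun t ht => add_smul_mem_strictMinRegion _ hx (ellAffine_linear_le n k) ht

end

theorem stmt_9_general (n : ℕ) :
    (OmegaSet n).Nonempty ∧
    Bornology.IsBounded (OmegaSet n) ∧
    (∀ x ∈ OmegaSet n, connectedComponentIn (TropSet n)ᶜ x = OmegaSet n) ∧
    (∀ x ∈ (TropSet n)ᶜ, x ∉ OmegaSet n →
      ¬ Bornology.IsBounded (connectedComponentIn (TropSet n)ᶜ x)) := by
  refine ⟨⟨0, by simp [OmegaSet]⟩, isBounded_OmegaSet n, fun x hx => ?_, fun x hx hxΩ => ?_⟩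
  · rw [OmegaSet_eq_strictMinRegion] at hx ⊢
    exact connectedComponentIn_compl_TropSet n hx
  · obtain ⟨a, ha⟩ := mem_iUnion.1 (compl_TropSet n ▸ hx)
    cases a with
    | none => exact absurd (OmegaSet_eq_strictMinRegion n ▸ ha) hxΩ
    | some k =>
      rw [connectedComponentIn_compl_TropSet n ha]
      exact not_isBounded_strictMinRegion_some n ha

/-- `Ω` is a bounded connected component of `ℝ^{n+1} ∖ Trop(X)`, and every
other connected component of the complement is unbounded. -/
theorem stmt_9 (n : ℕ) (hn : 1 ≤ n) :
    (OmegaSet n).Nonempty ∧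
    Bornology.IsBounded (OmegaSet n) ∧
    (∀ x ∈ OmegaSet n, connectedComponentIn (TropSet n)ᶜ x = OmegaSet n) ∧
    (∀ x ∈ (TropSet n)ᶜ, x ∉ OmegaSet n →
      ¬ Bornology.IsBounded (connectedComponentIn (TropSet n)ᶜ x)) :=
  stmt_9_general n
end

section
/- Let n ≥ 1. In ℝ^{n+2} set v_j = e_j + e_{n+1} and v′_j = e_j + e_{n+2} for j = 1, …, n, where e_1, …, e_{n+2} is the standard basis. Let σ = {Σ_{j=1}^n a_j v_j + Σ_{j=1}^n b_j v′_j : a_j ≥ 0, b_j ≥ 0} and, for i ∈ {1, …, n}, let σ_i be the set of nonnegative real combinations of v_1, …, v_i, v′_i, …, v′_n. Then σ = σ_1 ∪ σ_2 ∪ ⋯ ∪ σ_n. -/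
/-- `v_j = e_j + e_{n+1}` (0-indexed: `vReal n j` is `v_{j+1}` of the paper). -/
noncomputable def vReal (n : ℕ) (j : Fin n) : Fin (n + 2) → ℝ :=
  Pi.single (Fin.castAdd 2 j) 1 + Pi.single (Fin.natAdd n (0 : Fin 2)) 1

/-- `v′_j = e_j + e_{n+2}` (0-indexed: `vReal' n j` is `v′_{j+1}` of the paper). -/
noncomputable def vReal' (n : ℕ) (j : Fin n) : Fin (n + 2) → ℝ :=
  Pi.single (Fin.castAdd 2 j) 1 + Pi.single (Fin.natAdd n (1 : Fin 2)) 1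

/-- For `i ∈ {1,…,n}` (encoded as `i : Fin n`, the paper's index being `i.val + 1`), the
family of `n+1` vectors `v_1, …, v_i, v′_i, …, v′_n`. -/
noncomputable def genFam (n : ℕ) (i : Fin n) (k : Fin (n + 1)) : Fin (n + 2) → ℝ :=
  if h : k.val ≤ i.val then vReal n ⟨k.val, lt_of_le_of_lt h i.isLt⟩
  else vReal' n ⟨k.val - 1, by have hk := k.isLt; omega⟩


lemma vReal_apply (n : ℕ) (j m : Fin n) :
    vReal n j (Fin.castAdd 2 m) = if m = j then 1 else 0 := by
  simp [vReal, Pi.single_apply, Fin.ext_iff]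
  omega

lemma vReal_apply0 (n : ℕ) (j : Fin n) :
    vReal n j (Fin.natAdd n (0 : Fin 2)) = 1 := by
  simp [vReal, Pi.single_apply, Fin.ext_iff]
  omega

lemma vReal_apply1 (n : ℕ) (j : Fin n) :
    vReal n j (Fin.natAdd n (1 : Fin 2)) = 0 := by
  simp [vReal, Pi.single_apply, Fin.ext_iff]
  omega

lemma vReal'_apply (n : ℕ) (j m : Fin n) :
    vReal' n j (Fin.castAdd 2 m) = if m = j then 1 else 0 := by
  simp [vReal', Pi.single_apply, Fin.ext_iff]
  omega

lemma vReal'_apply0 (n : ℕ) (j : Fin n) :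
    vReal' n j (Fin.natAdd n (0 : Fin 2)) = 0 := by
  simp [vReal', Pi.single_apply, Fin.ext_iff]
  omega

lemma vReal'_apply1 (n : ℕ) (j : Fin n) :
    vReal' n j (Fin.natAdd n (1 : Fin 2)) = 1 := by
  simp [vReal', Pi.single_apply, Fin.ext_iff]
  omega

lemma coordCast (n : ℕ) (c d : Fin n → ℝ) (m : Fin n) :
    ((∑ j, c j • vReal n j) + ∑ j, d j • vReal' n j) (Fin.castAdd 2 m) = c m + d m := by
  simp only [Pi.add_apply, Finset.sum_apply, Pi.smul_apply, vReal_apply, vReal'_apply,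
    smul_eq_mul, mul_ite, mul_one, mul_zero]
  rw [Finset.sum_ite_eq Finset.univ m c, Finset.sum_ite_eq Finset.univ m d]
  simp

lemma coord0 (n : ℕ) (c d : Fin n → ℝ) :
    ((∑ j, c j • vReal n j) + ∑ j, d j • vReal' n j) (Fin.natAdd n (0 : Fin 2)) = ∑ j, c j := by
  simp [vReal_apply0, vReal'_apply0]

lemma coord1 (n : ℕ) (c d : Fin n → ℝ) :
    ((∑ j, c j • vReal n j) + ∑ j, d j • vReal' n j) (Fin.natAdd n (1 : Fin 2)) = ∑ j, d j := by
  simp [vReal_apply1, vReal'_apply1]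


lemma genFam_applyCast (n : ℕ) (i : Fin n) (k : Fin (n+1)) (m : Fin n) :
    genFam n i k (Fin.castAdd 2 m) =
      if k.val ≤ i.val then (if m.val = k.val then 1 else 0)
      else (if m.val + 1 = k.val then 1 else 0) := by
  unfold genFam
  rcases le_or_gt k.val i.val with h | h
  · rw [dif_pos h, vReal_apply, if_pos h]
    simp [Fin.ext_iff]
  · rw [dif_neg (not_le.2 h), vReal'_apply, if_neg (not_le.2 h)]
    simp only [Fin.ext_iff]
    split_ifs <;> first | rfl | omega

lemma genFam_apply0 (n : ℕ) (i : Fin n) (k : Fin (n+1)) :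
    genFam n i k (Fin.natAdd n (0 : Fin 2)) = if k.val ≤ i.val then 1 else 0 := by
  unfold genFam
  rcases le_or_gt k.val i.val with h | h
  · rw [dif_pos h, vReal_apply0, if_pos h]
  · rw [dif_neg (not_le.2 h), vReal'_apply0, if_neg (not_le.2 h)]

lemma genFam_apply1 (n : ℕ) (i : Fin n) (k : Fin (n+1)) :
    genFam n i k (Fin.natAdd n (1 : Fin 2)) = if k.val ≤ i.val then 0 else 1 := by
  unfold genFam
  rcases le_or_gt k.val i.val with h | h
  · rw [dif_pos h, vReal_apply1, if_pos h]
  · rw [dif_neg (not_le.2 h), vReal'_apply1, if_neg (not_le.2 h)]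

lemma gcoordCast (n : ℕ) (i : Fin n) (cc : Fin (n+1) → ℝ) (m : Fin n) :
    (∑ k, cc k • genFam n i k) (Fin.castAdd 2 m) =
      (if m.val ≤ i.val then cc m.castSucc else 0) +
      (if i.val ≤ m.val then cc m.succ else 0) := by
  simp only [Finset.sum_apply, Pi.smul_apply, genFam_applyCast, smul_eq_mul]
  have h1 : ∀ k : Fin (n+1),
      cc k * (if k.val ≤ i.val then (if m.val = k.val then (1:ℝ) else 0)
        else (if m.val + 1 = k.val then 1 else 0)) =
      (if m.castSucc = k then (if m.val ≤ i.val then cc k else 0) else 0) +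
      (if m.succ = k then (if i.val ≤ m.val then cc k else 0) else 0) := by
    intro k
    simp only [Fin.ext_iff, Fin.coe_castSucc, Fin.val_succ]
    split_ifs <;> first | ring1 | (exfalso; omega)
  rw [Finset.sum_congr rfl (fun k _ => h1 k), Finset.sum_add_distrib,
    Finset.sum_ite_eq, Finset.sum_ite_eq]
  simp

lemma gcoord0 (n : ℕ) (i : Fin n) (cc : Fin (n+1) → ℝ) :
    (∑ k, cc k • genFam n i k) (Fin.natAdd n (0 : Fin 2)) =
      ∑ k, (if k.val ≤ i.val then cc k else 0) := by
  simp only [Finset.sum_apply, Pi.smul_apply, genFam_apply0, smul_eq_mul]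
  exact Finset.sum_congr rfl fun k _ => by split_ifs <;> ring1

lemma gcoord1 (n : ℕ) (i : Fin n) (cc : Fin (n+1) → ℝ) :
    (∑ k, cc k • genFam n i k) (Fin.natAdd n (1 : Fin 2)) =
      ∑ k, (if i.val < k.val then cc k else 0) := by
  simp only [Finset.sum_apply, Pi.smul_apply, genFam_apply1, smul_eq_mul]
  exact Finset.sum_congr rfl fun k _ => by split_ifs <;> first | ring1 | (exfalso; omega)

lemma eq_of_coords (n : ℕ) (f g : Fin (n+2) → ℝ)
    (h : ∀ m : Fin n, f (Fin.castAdd 2 m) = g (Fin.castAdd 2 m))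
    (h0 : f (Fin.natAdd n (0 : Fin 2)) = g (Fin.natAdd n (0 : Fin 2)))
    (h1 : f (Fin.natAdd n (1 : Fin 2)) = g (Fin.natAdd n (1 : Fin 2))) : f = g := by
  funext m
  rcases lt_trichotomy m.val n with hm | hm | hm
  · have hme : m = Fin.castAdd 2 ⟨m.val, hm⟩ := by ext; simp
    rw [hme]; exact h _
  · have hme : m = Fin.natAdd n (0 : Fin 2) := by ext; simp [hm]
    rw [hme]; exact h0
  · have hme : m = Fin.natAdd n (1 : Fin 2) := by
      ext; simp; omega
    rw [hme]; exact h1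

noncomputable def extY (n : ℕ) (y : Fin n → ℝ) (t : ℕ) : ℝ := if h : t < n then y ⟨t, h⟩ else 0

lemma extY_apply (n : ℕ) (y : Fin n → ℝ) (m : Fin n) : extY n y m.val = y m := by
  rw [extY, dif_pos m.isLt, Fin.eta]

lemma extY_nonneg (n : ℕ) (y : Fin n → ℝ) (hy : ∀ j, 0 ≤ y j) (t : ℕ) : 0 ≤ extY n y t := by
  rw [extY]; split_ifs; exacts [hy _, le_refl 0]

noncomputable def ccDef (n i0 : ℕ) (y : Fin n → ℝ) (A P0 T : ℝ) (k : ℕ) : ℝ :=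
  if k < i0 then extY n y k else if k = i0 then A - P0 else if k = i0 + 1 then T - A
  else extY n y (k - 1)

lemma exists_cc (n i0 : ℕ) (hi : i0 < n) (y : Fin n → ℝ) (hy : ∀ j, 0 ≤ y j) (A : ℝ)
    (hP0 : ∑ j, (if j.val < i0 then y j else 0) ≤ A)
    (hTi : A ≤ ∑ j, (if j.val ≤ i0 then y j else 0)) :
    ∃ cc : Fin (n+1) → ℝ, (∀ k, 0 ≤ cc k) ∧
      (∀ m : Fin n, (if m.val ≤ i0 then cc m.castSucc else 0) +
        (if i0 ≤ m.val then cc m.succ else 0) = y m) ∧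
      (∑ k, (if k.val ≤ i0 then cc k else 0)) = A ∧
      (∑ k, (if i0 < k.val then cc k else 0)) = (∑ j, y j) - A := by
  set P0 : ℝ := ∑ j, (if j.val < i0 then y j else 0) with hP0def
  set T : ℝ := ∑ j, (if j.val ≤ i0 then y j else 0) with hTdef
  refine ⟨fun k => ccDef n i0 y A P0 T k.val, ?_, ?_, ?_, ?_⟩
  · intro k
    simp only [ccDef]
    split_ifs
    exacts [extY_nonneg n y hy _, by linarith, by linarith, extY_nonneg n y hy _]
  · intro m
    simp only [ccDef, Fin.coe_castSucc, Fin.val_succ]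
    rcases lt_trichotomy m.val i0 with hm | hm | hm
    · rw [if_pos (show m.val ≤ i0 from le_of_lt hm), if_pos (show m.val < i0 from hm),
        extY_apply, if_neg (show ¬ i0 ≤ m.val by omega), add_zero]
    · have hT : T = P0 + y m := by
        rw [hTdef, hP0def]
        have hpt : ∀ j : Fin n, (if j.val ≤ i0 then y j else 0) =
            (if j.val < i0 then y j else 0) + (if j = m then y j else 0) := by
          intro j
          by_cases hj : j = m
          · subst hj; rw [if_pos (show j.val ≤ i0 from le_of_eq hm),
              if_neg (show ¬ j.val < i0 by omega), if_pos rfl, zero_add]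
          · have hjm : j.val ≠ i0 := by
              intro hc; exact hj (Fin.ext (hc.trans hm.symm))
            by_cases hj2 : j.val < i0
            · rw [if_pos (show j.val ≤ i0 from le_of_lt hj2), if_pos hj2, if_neg hj, add_zero]
            · rw [if_neg (show ¬ j.val ≤ i0 by omega), if_neg hj2, if_neg hj, add_zero]
        rw [Finset.sum_congr rfl (fun j _ => hpt j), Finset.sum_add_distrib,
          Finset.sum_ite_eq' Finset.univ m y]
        simp
      rw [if_pos (show m.val ≤ i0 from le_of_eq hm),
        if_neg (show ¬ m.val < i0 by omega), if_pos (show m.val = i0 from hm),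
        if_pos (show i0 ≤ m.val from le_of_eq hm.symm),
        if_neg (show ¬ m.val + 1 < i0 by omega), if_neg (show ¬ m.val + 1 = i0 by omega),
        if_pos (show m.val + 1 = i0 + 1 by omega), hT]
      ring
    · rw [if_neg (show ¬ m.val ≤ i0 by omega), if_pos (show i0 ≤ m.val from le_of_lt hm),
        if_neg (show ¬ m.val + 1 < i0 by omega), if_neg (show ¬ m.val + 1 = i0 by omega),
        if_neg (show ¬ m.val + 1 = i0 + 1 by omega), Nat.add_sub_cancel,
        extY_apply, zero_add]
  · have key : ∀ k : Fin (n+1), (if k.val ≤ i0 then ccDef n i0 y A P0 T k.val else 0) =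
        (if k.val < i0 then extY n y k.val else 0) +
        (if k = (⟨i0, by omega⟩ : Fin (n+1)) then A - P0 else 0) := by
      intro k
      simp only [ccDef, Fin.ext_iff]
      split_ifs <;> first | rfl | ring1 | (exfalso; omega)
    simp only []
    rw [Finset.sum_congr rfl (fun k _ => key k), Finset.sum_add_distrib,
      Finset.sum_ite_eq' Finset.univ (⟨i0, by omega⟩ : Fin (n+1)) (fun _ => A - P0)]
    have h1 : (∑ k : Fin (n+1), if k.val < i0 then extY n y k.val else 0) = P0 := by
      rw [Fin.sum_univ_castSucc]
      have hlast : (if (Fin.last n).val < i0 then extY n y (Fin.last n).val else 0) = 0 := by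
        rw [if_neg]; simp [Fin.last]; omega
      rw [hlast, add_zero, hP0def]
      exact Finset.sum_congr rfl fun j _ => by
        rw [Fin.coe_castSucc]
        by_cases hj : j.val < i0
        · rw [if_pos hj, if_pos hj, extY_apply]
        · rw [if_neg hj, if_neg hj]
    rw [h1]; simp
  · have key : ∀ k : Fin (n+1), (if i0 < k.val then ccDef n i0 y A P0 T k.val else 0) =
        (if k = (⟨i0+1, by omega⟩ : Fin (n+1)) then T - A else 0) +
        (if i0+1 < k.val then extY n y (k.val - 1) else 0) := by
      intro k
      simp only [ccDef, Fin.ext_iff]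
      split_ifs <;> first | rfl | ring1 | (exfalso; omega)
    simp only []
    rw [Finset.sum_congr rfl (fun k _ => key k), Finset.sum_add_distrib,
      Finset.sum_ite_eq' Finset.univ (⟨i0+1, by omega⟩ : Fin (n+1)) (fun _ => T - A)]
    have h2 : (∑ k : Fin (n+1), if i0+1 < k.val then extY n y (k.val - 1) else 0) =
        ∑ j : Fin n, (if i0 < j.val then y j else 0) := by
      rw [Fin.sum_univ_succ]
      have h0 : (if i0+1 < ((0 : Fin (n+1))).val then extY n y (((0:Fin (n+1))).val - 1) else 0) = 0 := by
        rw [if_neg]; simp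
      rw [h0, zero_add]
      exact Finset.sum_congr rfl fun j _ => by
        rw [Fin.val_succ]
        by_cases hj : i0 < j.val
        · rw [if_pos (show i0 + 1 < j.val + 1 by omega), if_pos hj, Nat.add_sub_cancel, extY_apply]
        · rw [if_neg (show ¬ i0 + 1 < j.val + 1 by omega), if_neg hj]
    rw [h2]
    have h3 : (∑ j, y j) = T + ∑ j : Fin n, (if i0 < j.val then y j else 0) := by
      rw [hTdef, ← Finset.sum_add_distrib]
      exact Finset.sum_congr rfl fun j _ => by
        by_cases hj : j.val ≤ i0
        · rw [if_pos hj, if_neg (show ¬ i0 < j.val by omega), add_zero]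
        · rw [if_neg hj, if_pos (show i0 < j.val by omega), zero_add]
    simp
    linarith


/-- the cone `σ` of all nonnegative combinations of `v_1,…,v_n,v′_1,…,v′_n`
is the union over `i ∈ {1,…,n}` of the cones `σ_i` of nonnegative combinations of
`v_1, …, v_i, v′_i, …, v′_n`. -/
theorem stmt_13 (n : ℕ) (hn : 1 ≤ n) :
    {y : Fin (n + 2) → ℝ | ∃ a b : Fin n → ℝ,
        (∀ j, 0 ≤ a j) ∧ (∀ j, 0 ≤ b j) ∧
        y = (∑ j, a j • vReal n j) + ∑ j, b j • vReal' n j} =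
      ⋃ i : Fin n, {y : Fin (n + 2) → ℝ | ∃ cc : Fin (n + 1) → ℝ,
        (∀ k, 0 ≤ cc k) ∧ y = ∑ k, cc k • genFam n i k} := by
  ext y
  simp only [Set.mem_setOf_eq, Set.mem_iUnion]
  constructor
  · rintro ⟨a, b, ha, hb, hy⟩
    set Y : Fin n → ℝ := fun j => a j + b j with hYdef
    have hYn : ∀ j, 0 ≤ Y j := fun j => add_nonneg (ha j) (hb j)
    set A : ℝ := ∑ j, a j with hAdef
    have hPn : A ≤ ∑ j, (if j.val ≤ n-1 then Y j else 0) := by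
      have he : ∑ j, (if (j : Fin n).val ≤ n-1 then Y j else 0) = ∑ j, Y j :=
        Finset.sum_congr rfl fun j _ => if_pos (by have := j.isLt; omega)
      rw [he, hAdef]
      exact Finset.sum_le_sum fun j _ => le_add_of_nonneg_right (hb j)
    have hEx : ∃ t : ℕ, A ≤ ∑ j, (if j.val ≤ t then Y j else 0) := ⟨n-1, hPn⟩
    set i0 := Nat.find hEx with hi0def
    have hspec : A ≤ ∑ j, (if j.val ≤ i0 then Y j else 0) := Nat.find_spec hEx
    have hile : i0 ≤ n - 1 := Nat.find_min' hEx hPn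
    have hi0 : i0 < n := by omega
    have hlow : ∑ j, (if j.val < i0 then Y j else 0) ≤ A := by
      rcases Nat.eq_zero_or_pos i0 with h0 | h0
      · have hz : ∑ j, (if (j : Fin n).val < i0 then Y j else 0) = 0 :=
          Finset.sum_eq_zero fun j _ => if_neg (by omega)
        rw [hz, hAdef]
        exact Finset.sum_nonneg fun j _ => ha j
      · have hne := Nat.find_min hEx (show i0 - 1 < i0 by omega)
        have heq : ∑ j, (if (j : Fin n).val < i0 then Y j else 0) =
            ∑ j, (if (j : Fin n).val ≤ i0 - 1 then Y j else 0) :=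
          Finset.sum_congr rfl fun j _ => by
            by_cases hj : (j : Fin n).val < i0
            · rw [if_pos hj, if_pos (by omega)]
            · rw [if_neg hj, if_neg (by omega)]
        rw [heq]
        exact le_of_lt (not_le.1 hne)
    obtain ⟨cc, hccn, hcoord, hsA, hsB⟩ := exists_cc n i0 hi0 Y hYn A hlow hspec
    refine ⟨⟨i0, hi0⟩, cc, hccn, ?_⟩
    rw [hy]
    apply eq_of_coords n
    · intro m
      rw [coordCast, gcoordCast]
      exact (hcoord m).symm
    · rw [coord0, gcoord0]
      exact hsA.symm
    · rw [coord1, gcoord1]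
      have hYsum : ∑ j, Y j = (∑ j, a j) + ∑ j, b j := Finset.sum_add_distrib
      have := hsB
      linarith
  · rintro ⟨i, cc, hcc, hy⟩
    refine ⟨fun j => if j.val ≤ i.val then cc j.castSucc else 0,
            fun j => if i.val ≤ j.val then cc j.succ else 0, ?_, ?_, ?_⟩
    · intro j; dsimp only; split_ifs; exacts [hcc _, le_refl 0]
    · intro j; dsimp only; split_ifs; exacts [hcc _, le_refl 0]
    · rw [hy]
      apply eq_of_coords n
      · intro m
        rw [gcoordCast, coordCast]
      · rw [gcoord0, coord0, Fin.sum_univ_castSucc]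
        have hlast : (if (Fin.last n).val ≤ i.val then cc (Fin.last n) else 0) = 0 :=
          if_neg (by have := i.isLt; simp [Fin.last]; )
        rw [hlast, add_zero]
        exact Finset.sum_congr rfl fun j _ => by rw [Fin.coe_castSucc]
      · rw [gcoord1, coord1, Fin.sum_univ_succ]
        have h0 : (if i.val < ((0 : Fin (n+1))).val then cc 0 else 0) = 0 :=
          if_neg (by simp)
        rw [h0, zero_add]
        exact Finset.sum_congr rfl fun j _ => by
          rw [Fin.val_succ]
          by_cases hj : i.val ≤ j.val
          · rw [if_pos (show i.val < j.val + 1 by omega), if_pos hj]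
          · rw [if_neg (show ¬ i.val < j.val + 1 by omega), if_neg hj]
end
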